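/- Let R be a commutative ring, ≺ a monomial ordering on the standard monomial basis B of R⟨X₁,…,Xₙ⟩, and G a monic subset generating the ideal I = ⟨G⟩. Then G is a monic Gröbner basis of I if and only if, as R-modules, R⟨X₁,…,Xₙ⟩ is the internal direct sum of I and the R-span of the set N(G) of normal monomials (i.e., I + span_R N(G) = R⟨X₁,…,Xₙ⟩ and I ∩ span_R N(G) = 0), and in that case R⟨X₁,…,Xₙ⟩ is likewise the internal direct sum of the ideal ⟨LM(I)⟩ generated by the leading monomials of I and span_R N(G). -/

import Mathlib

/-!
Every word outside `N(G)` is the leading word, with coefficient `1`, of an element `w g s` of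
`⟨G⟩` (and is itself in `⟨LM(I)⟩`), so induction along the well-ordering writes every element as
an ideal element plus a combination of normal words, for any monic `G`. Directness is where
the Gröbner property enters: a nonzero element of `I ∩ span N(G)` has a normal leading word;
conversely, an element of `I` with normal leading word `m` reduces below `m` to a nonzero
element of `I ∩ span N(G)`. Elements of `⟨LM(I)⟩` are supported on words divisible by some
`LM(f)`, `f ∈ I`, and for a Gröbner basis none of these is normal.
-/

noncomputable section
open MonoidAlgebra
open scoped Classical

/-- Words in the alphabet `X_1, ..., X_n`: the standard monomial basis `B`. -/
abbrev Word (n : ℕ) : Type := FreeMonoid (Fin n)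

/-- The free `R`-algebra `R⟨X_1, ..., X_n⟩`, realized as the monoid algebra of the
free monoid on `n` letters over `R`. -/
abbrev FreeAlg (R : Type) [CommRing R] (n : ℕ) : Type := MonoidAlgebra R (Word n)

variable {R : Type} [CommRing R] {n : ℕ}

/-- The monomial (word) `w` viewed as an element of the free algebra. -/
def mono (R : Type) [CommRing R] {n : ℕ} (w : Word n) : FreeAlg R n :=
  MonoidAlgebra.of R (Word n) w

/-- A monomial ordering: a well-ordering on words compatible with two-sided multiplication. -/
def IsMonomialOrder (n : ℕ) [LinearOrder (Word n)] : Prop :=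
  WellFoundedLT (Word n) ∧ ∀ w u v s : Word n, u < v → w * u * s < w * v * s

/-- The leading monomial of `f` (with junk value `1` for `f = 0`). -/
def LMon [LinearOrder (Word n)] (f : FreeAlg R n) : Word n :=
  if h : f = 0 then 1 else f.coeff.support.max'
    (Finsupp.support_nonempty_iff.mpr (MonoidAlgebra.coeff_eq_zero.not.mpr h))

/-- The leading coefficient of `f`. -/
def LCoef [LinearOrder (Word n)] (f : FreeAlg R n) : R := f.coeff (LMon f)

/-- `f` is monic: it is nonzero and its leading coefficient is `1`. -/
def IsMonic [LinearOrder (Word n)] (f : FreeAlg R n) : Prop := f ≠ 0 ∧ LCoef f = 1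

/-- `v` divides `u` as words: `u = w * v * s` for some words `w, s`. -/
def MDvd {n : ℕ} (v u : Word n) : Prop := ∃ w s : Word n, u = w * v * s

/-- `G` is a monic Gröbner basis of the two-sided ideal `I`: every element of `G` is monic,
and the leading monomial of every nonzero element of `I` is divisible by the leading
monomial of some element of `G`. -/
def IsMonicGB [LinearOrder (Word n)] (G : Set (FreeAlg R n))
    (I : TwoSidedIdeal (FreeAlg R n)) : Prop :=
  (∀ g ∈ G, IsMonic g) ∧ ∀ f ∈ I, f ≠ 0 → ∃ g ∈ G, MDvd (LMon g) (LMon f)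

/-- The set `N(G)` of normal words modulo `G`: words not divisible by any `LM(g)`, `g ∈ G`. -/
def NormalWords [LinearOrder (Word n)] (G : Set (FreeAlg R n)) : Set (Word n) :=
  {u | ∀ g ∈ G, ¬ MDvd (LMon g) u}

/-- The set `LM(S)` of leading monomials of the nonzero elements of `S`. -/
def LMset [LinearOrder (Word n)] (S : Set (FreeAlg R n)) : Set (Word n) :=
  {w | ∃ f ∈ S, f ≠ 0 ∧ LMon f = w}

/-- `R⟨X⟩` is the internal direct sum (as `R`-modules) of the set `T` and the `R`-span of
the monomials in `N(G)`. -/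
def DirectDecomp [LinearOrder (Word n)] (T : Set (FreeAlg R n))
    (G : Set (FreeAlg R n)) : Prop :=
  (∀ f : FreeAlg R n, ∃ a r : FreeAlg R n, a ∈ T ∧
      r ∈ Submodule.span R (mono R '' NormalWords G) ∧ f = a + r) ∧
  ∀ f : FreeAlg R n, f ∈ T → f ∈ Submodule.span R (mono R '' NormalWords G) → f = 0


namespace TwoSidedIdeal

def toSubmodule (R : Type*) {A : Type*} [CommSemiring R] [Ring A] [Algebra R A]
    (I : TwoSidedIdeal A) : Submodule R A :=
  I.asIdeal.restrictScalars R

@[simp]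
theorem mem_toSubmodule {R A : Type*} [CommSemiring R] [Ring A] [Algebra R A]
    {I : TwoSidedIdeal A} {x : A} : x ∈ I.toSubmodule R ↔ x ∈ I := by
  simp [toSubmodule]

end TwoSidedIdeal

namespace MonoidAlgebra

theorem single_mem_supported {k M : Type*} [Semiring k] {s : Set M} {m : M} (r : k)
    (hm : m ∈ s) : single m r ∈ supported k k s :=
  mem_supported.mpr ((Finset.coe_subset.mpr Finsupp.support_single_subset).trans (by simpa))

theorem sub_single_mem_supported_Iio {k M : Type*} [Ring k] [LinearOrder M] {x : k[M]} {m : M}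
    (hx : ↑x.coeff.support ⊆ Set.Iic m) : x - single m (x.coeff m) ∈ supported k k (Set.Iio m) := by
  refine mem_supported'.mpr fun u hu => ?_
  rcases (not_lt.mp hu).eq_or_lt with rfl | hmu
  · simp
  · have hxu : x.coeff u = 0 := Finsupp.notMem_support_iff.mp fun h => (hx h).not_gt hmu
    simp [hxu, hmu.ne]

section Triangular

variable {k M : Type*} [Ring k] [LinearOrder M] [WellFoundedLT M]

theorem supported_le_sup_supported_inter {T : Submodule k k[M]} {L N : Set M}
    (hL : IsLowerSet L)
    (hT : ∀ m ∈ L, m ∉ N → ∃ x ∈ T, x.coeff m = 1 ∧ ↑x.coeff.support ⊆ Set.Iic m) :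
    supported k k L ≤ T ⊔ supported k k (N ∩ L) := by
  rw [supported_eq_span_single, Submodule.span_le]
  rintro _ ⟨m, hm, rfl⟩
  induction m using WellFoundedLT.induction with
  | _ m ih =>
  by_cases hmN : m ∈ N
  · exact Submodule.mem_sup_right (single_mem_supported 1 ⟨hmN, hm⟩)
  obtain ⟨x, hxT, hxm, hxs⟩ := hT m hm hmN
  have hIio : supported k k (Set.Iio m) ≤ T ⊔ supported k k (N ∩ L) := by
    rw [supported_eq_span_single, Submodule.span_le]
    rintro _ ⟨u, hu, rfl⟩
    exact ih u hu (hL hu.le hm)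
  have hlower := hIio (sub_single_mem_supported_Iio hxs)
  rw [hxm] at hlower
  simpa using Submodule.sub_mem _ (Submodule.mem_sup_left hxT) hlower

theorem codisjoint_supported_of_triangular {T : Submodule k k[M]} {N : Set M}
    (hT : ∀ m ∉ N, ∃ x ∈ T, x.coeff m = 1 ∧ ↑x.coeff.support ⊆ Set.Iic m) :
    Codisjoint T (supported k k N) := by
  refine codisjoint_iff.mpr (eq_top_iff.mpr fun f _ => ?_)
  simpa using supported_le_sup_supported_inter (N := N) isLowerSet_univ
    (fun m _ hm => hT m hm) (mem_supported.mpr (Set.subset_univ _))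

end Triangular

theorem support_subset_of_mem_twoSidedIdeal_span {k M : Type*} [Ring k] [Monoid M]
    {U S : Set M} (hU : ∀ a u b, u ∈ U → a * u * b ∈ U) (hSU : S ⊆ U) {x : k[M]}
    (hx : x ∈ TwoSidedIdeal.span (of k M '' S)) : ↑x.coeff.support ⊆ U := by
  let J : TwoSidedIdeal k[M] := TwoSidedIdeal.mk' {y | ↑y.coeff.support ⊆ U}
    (by simp)
    (fun hy hz => (Finset.coe_subset.mpr Finsupp.support_add).trans
      (by simpa using And.intro hy hz))
    (fun hy => by simpa using hy)
    (fun {y z} hz u hu => by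
      obtain ⟨a, -, b, hb, rfl⟩ := Finset.mem_mul.mp (support_coeff_mul_subset y z hu)
      simpa using hU a b 1 (hz hb))
    (fun {y z} hy u hu => by
      obtain ⟨a, ha, b, -, rfl⟩ := Finset.mem_mul.mp (support_coeff_mul_subset y z hu)
      simpa using hU 1 a b (hy ha))
  have hJ (y : k[M]) : y ∈ J ↔ ↑y.coeff.support ⊆ U := TwoSidedIdeal.mem_mk' ..
  refine (hJ x).mp (TwoSidedIdeal.mem_span_iff.mp hx J ?_)
  rintro _ ⟨m, hm, rfl⟩
  refine (hJ _).mpr fun u hu => ?_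
  rw [of_apply, Finset.mem_coe] at hu
  rw [Finset.mem_singleton.mp (Finsupp.support_single_subset hu)]
  exact hSU hm

end MonoidAlgebra

theorem span_mono_eq_supported (N : Set (Word n)) :
    Submodule.span R (mono R '' N) = supported R R N := by
  rw [supported_eq_span_single]
  rfl

theorem coeff_mono_mul_mul_mono (f : FreeAlg R n) (w u s : Word n) :
    (mono R w * f * mono R s).coeff (w * u * s) = f.coeff u := by
  simp [mono]

section LeadingMonomials

variable [LinearOrder (Word n)]

theorem lmon_mem_support {f : FreeAlg R n} (hf : f ≠ 0) : LMon f ∈ f.coeff.support := by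
  rw [LMon, dif_neg hf]
  exact Finset.max'_mem _ _

theorem support_subset_Iic_lmon (f : FreeAlg R n) : ↑f.coeff.support ⊆ Set.Iic (LMon f) := by
  by_cases hf : f = 0
  · simp [hf]
  · intro u hu
    rw [LMon, dif_neg hf]
    exact Finset.le_max' _ u hu

theorem support_mono_mul_mul_mono_subset (hord : IsMonomialOrder n) (f : FreeAlg R n)
    (w s : Word n) :
    ↑(mono R w * f * mono R s).coeff.support ⊆ Set.Iic (w * LMon f * s) := by
  intro v hv
  obtain ⟨_, hx, rfl⟩ := Finset.mem_image.mp (support_coeff_mul_single_subset _ _ _ hv)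
  obtain ⟨u, hu, rfl⟩ := Finset.mem_image.mp (support_coeff_single_mul_subset _ _ _ hx)
  rcases (support_subset_Iic_lmon f hu).lt_or_eq with hlt | rfl
  · exact (hord.2 w u _ s hlt).le
  · exact le_rfl

end LeadingMonomials

section NormalWords

variable [LinearOrder (Word n)] {G : Set (FreeAlg R n)}

theorem directDecomp_iff_isCompl (I : TwoSidedIdeal (FreeAlg R n)) :
    DirectDecomp (I : Set (FreeAlg R n)) G ↔
      IsCompl (I.toSubmodule R) (supported R R (NormalWords G)) := by
  rw [isCompl_iff, Submodule.disjoint_def, codisjoint_iff, Submodule.eq_top_iff', DirectDecomp,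
    span_mono_eq_supported, and_comm]
  simp only [Submodule.mem_sup, TwoSidedIdeal.mem_toSubmodule, SetLike.mem_coe]
  exact and_congr_right' (forall_congr' fun f => by simp only [eq_comm, exists_and_left])

theorem notMem_normalWords_iff {m : Word n} :
    m ∉ NormalWords G ↔ ∃ g ∈ G, MDvd (LMon g) m := by
  simp [NormalWords]

theorem mul_mul_notMem_normalWords {u : Word n} (hu : u ∉ NormalWords G) (w s : Word n) :
    w * u * s ∉ NormalWords G := by
  rw [notMem_normalWords_iff] at hu ⊢
  obtain ⟨g, hg, a, b, rfl⟩ := hu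
  exact ⟨g, hg, w * a, b * s, by simp only [mul_assoc]⟩

theorem exists_mem_span_triangular (hord : IsMonomialOrder n) (hmonic : ∀ g ∈ G, IsMonic g)
    {m : Word n} (hm : m ∉ NormalWords G) :
    ∃ x ∈ (TwoSidedIdeal.span G).toSubmodule R, x.coeff m = 1 ∧
      ↑x.coeff.support ⊆ Set.Iic m := by
  obtain ⟨g, hg, w, s, rfl⟩ := notMem_normalWords_iff.mp hm
  refine ⟨mono R w * g * mono R s, ?_, ?_, support_mono_mul_mul_mono_subset hord g w s⟩
  · exact TwoSidedIdeal.mem_toSubmodule.mpr <| TwoSidedIdeal.mul_mem_right _ _ _ <|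
      TwoSidedIdeal.mul_mem_left _ _ _ (TwoSidedIdeal.subset_span hg)
  · rw [coeff_mono_mul_mul_mono]
    exact (hmonic g hg).2

theorem codisjoint_span_supported_normalWords (hord : IsMonomialOrder n)
    (hmonic : ∀ g ∈ G, IsMonic g) :
    Codisjoint ((TwoSidedIdeal.span G).toSubmodule R) (supported R R (NormalWords G)) :=
  have := hord.1
  codisjoint_supported_of_triangular fun _ hm => exists_mem_span_triangular hord hmonic hm

theorem disjoint_supported_normalWords_of_isMonicGB {I : TwoSidedIdeal (FreeAlg R n)}
    (hGB : IsMonicGB G I) : Disjoint (I.toSubmodule R) (supported R R (NormalWords G)) := by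
  refine Submodule.disjoint_def.mpr fun f hfI hfN => ?_
  by_contra hf
  obtain ⟨g, hg, hdvd⟩ := hGB.2 f (TwoSidedIdeal.mem_toSubmodule.mp hfI) hf
  exact mem_supported.mp hfN (lmon_mem_support hf) g hg hdvd

/-- Reducing the terms of `f` below its normal leading word `m` gives `c • m + r ∈ ⟨G⟩` with
`r` normal and supported below `m`; disjointness forces it to vanish, so `c = 0`. -/
theorem isMonicGB_of_disjoint (hord : IsMonomialOrder n) (hmonic : ∀ g ∈ G, IsMonic g)
    (hdisj : Disjoint ((TwoSidedIdeal.span G).toSubmodule R) (supported R R (NormalWords G))) :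
    IsMonicGB G (TwoSidedIdeal.span G) := by
  have := hord.1
  refine ⟨hmonic, fun f hfI hf => ?_⟩
  by_contra hnd
  have hN : LMon f ∈ NormalWords G := fun g hg hdvd => hnd ⟨g, hg, hdvd⟩
  set m := LMon f
  set c := f.coeff m
  obtain ⟨a, ha, r, hr, hsum⟩ := Submodule.mem_sup.mp <|
    supported_le_sup_supported_inter (N := NormalWords G) (isLowerSet_Iio m)
      (fun _ _ hu => exists_mem_span_triangular hord hmonic hu)
      (sub_single_mem_supported_Iio (support_subset_Iic_lmon f))
  have hzero : single m c + r = 0 := by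
    refine Submodule.disjoint_def.mp hdisj _ ?_ ?_
    · have hsplit : single m c + r = f - a := by
        rw [eq_sub_iff_add_eq] at hsum ⊢
        rw [← hsum]
        abel
      rw [hsplit]
      exact Submodule.sub_mem _ (TwoSidedIdeal.mem_toSubmodule.mpr hfI) ha
    · exact Submodule.add_mem _ (single_mem_supported _ hN)
        (supported_mono Set.inter_subset_left hr)
  have hrm : r.coeff m = 0 :=
    Finsupp.notMem_support_iff.mp fun h => lt_irrefl m (mem_supported.mp hr h).2
  have := congrArg (fun x : FreeAlg R n => x.coeff m) hzero
  simp only [coeff_add, Finsupp.add_apply, coeff_single, Finsupp.single_eq_same, hrm,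
    add_zero, coeff_zero, Finsupp.coe_zero, Pi.zero_apply] at this
  exact Finsupp.mem_support_iff.mp (lmon_mem_support hf) this

theorem codisjoint_span_lmset_supported_normalWords [WellFoundedLT (Word n)]
    {I : TwoSidedIdeal (FreeAlg R n)} (hGI : G ⊆ I) (hG : ∀ g ∈ G, g ≠ 0) :
    Codisjoint ((TwoSidedIdeal.span (mono R '' LMset (I : Set (FreeAlg R n)))).toSubmodule R)
      (supported R R (NormalWords G)) := by
  refine codisjoint_supported_of_triangular fun m hm => ⟨mono R m, ?_, by simp [mono], ?_⟩
  · obtain ⟨g, hg, w, s, rfl⟩ := notMem_normalWords_iff.mp hm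
    have hgen : mono R (LMon g) ∈ mono R '' LMset (I : Set (FreeAlg R n)) :=
      ⟨LMon g, ⟨g, hGI hg, hG g hg, rfl⟩, rfl⟩
    rw [TwoSidedIdeal.mem_toSubmodule, mono, map_mul, map_mul]
    exact TwoSidedIdeal.mul_mem_right _ _ _ <|
      TwoSidedIdeal.mul_mem_left _ _ _ (TwoSidedIdeal.subset_span hgen)
  · exact (Finset.coe_subset.mpr Finsupp.support_single_subset).trans (by simp)

theorem disjoint_span_lmset_supported_normalWords {I : TwoSidedIdeal (FreeAlg R n)}
    (hGB : IsMonicGB G I) :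
    Disjoint ((TwoSidedIdeal.span (mono R '' LMset (I : Set (FreeAlg R n)))).toSubmodule R)
      (supported R R (NormalWords G)) := by
  refine Submodule.disjoint_def.mpr fun f hfJ hfN => ?_
  by_contra hf
  have hsupp := support_subset_of_mem_twoSidedIdeal_span (U := (NormalWords G)ᶜ)
    (fun w _ s hu => mul_mul_notMem_normalWords hu w s)
    (by
      rintro _ ⟨f₀, hf₀I, hf₀, rfl⟩
      exact notMem_normalWords_iff.mpr (hGB.2 f₀ hf₀I hf₀))
    (TwoSidedIdeal.mem_toSubmodule.mp hfJ)
  exact hsupp (lmon_mem_support hf) (mem_supported.mp hfN (lmon_mem_support hf))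

end NormalWords

/-- For a monic subset `G` generating `I = ⟨G⟩`: `G` is a monic Gröbner
basis of `I` iff `R⟨X⟩ = I ⊕ span_R N(G)`, and in that case also
`R⟨X⟩ = ⟨LM(I)⟩ ⊕ span_R N(G)`. -/
theorem monicGB_iff_module_decomposition [LinearOrder (Word n)] (hord : IsMonomialOrder n)
    (G : Set (FreeAlg R n)) (hmonic : ∀ g ∈ G, IsMonic g) :
    (IsMonicGB G (TwoSidedIdeal.span G) ↔
      DirectDecomp ((TwoSidedIdeal.span G : TwoSidedIdeal (FreeAlg R n)) :
        Set (FreeAlg R n)) G) ∧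
    (IsMonicGB G (TwoSidedIdeal.span G) →
      DirectDecomp
        ((TwoSidedIdeal.span (mono R '' LMset
            ((TwoSidedIdeal.span G : TwoSidedIdeal (FreeAlg R n)) : Set (FreeAlg R n))) :
          TwoSidedIdeal (FreeAlg R n)) : Set (FreeAlg R n)) G) := by
  have := hord.1
  simp only [directDecomp_iff_isCompl]
  exact ⟨⟨fun hGB => ⟨disjoint_supported_normalWords_of_isMonicGB hGB,
      codisjoint_span_supported_normalWords hord hmonic⟩,
    fun h => isMonicGB_of_disjoint hord hmonic h.disjoint⟩,
    fun hGB => ⟨disjoint_span_lmset_supported_normalWords hGB,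
      codisjoint_span_lmset_supported_normalWords TwoSidedIdeal.subset_span
        fun g hg => (hmonic g hg).1⟩⟩
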